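/- Let P₁, …, P_N be orthogonal projections on the finite-dimensional real inner product spaces acting on a tensor (multilinear) product space, with Q = P₁ ∘ P₂ ∘ ⋯ ∘ P_N the composition of pairwise-commuting orthogonal projections. Then for any element x of the space, ‖x − Q x‖² ≤ Σ_{n=1}^N ‖x − P_n x‖². -/
import Mathlib


open RealInnerProductSpace BigOperators

private lemma contract {V : Type*} [NormedAddCommGroup V] [InnerProductSpace ℝ V]
    (P : V →ₗ[ℝ] V) (hidem : P ∘ₗ P = P)
    (hsym : ∀ x y : V, ⟪P x, y⟫ = ⟪x, P y⟫) (y : V) : ‖P y‖ ≤ ‖y‖ := by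
  have h1 : ⟪P y, P y⟫ = ⟪y, P y⟫ := by
    rw [hsym]
    have : P (P y) = P y := by
      have := congrArg (fun f : V →ₗ[ℝ] V => f y) hidem
      simpa using this
    rw [this]
  have h2 : ‖P y‖ ^ 2 ≤ ‖y‖ * ‖P y‖ := by
    rw [← real_inner_self_eq_norm_sq, h1]
    exact real_inner_le_norm y (P y)
  rcases eq_or_lt_of_le (norm_nonneg (P y)) with h | h
  · rw [← h]; exact norm_nonneg y
  · nlinarith

private lemma ortho {V : Type*} [NormedAddCommGroup V] [InnerProductSpace ℝ V]
    (P : V →ₗ[ℝ] V) (hidem : P ∘ₗ P = P)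
    (hsym : ∀ x y : V, ⟪P x, y⟫ = ⟪x, P y⟫) (x y : V) : ⟪x - P x, P y⟫ = 0 := by
  have hPP : ∀ z, P (P z) = P z := fun z => by
    have := congrArg (fun f : V →ₗ[ℝ] V => f z) hidem
    simpa using this
  rw [inner_sub_left, hsym x (P y), hPP]
  ring

private lemma main_ind {V : Type*} [NormedAddCommGroup V] [InnerProductSpace ℝ V] :
    ∀ (N : ℕ) (P : Fin N → (V →ₗ[ℝ] V)),
    (∀ n, P n ∘ₗ P n = P n) →
    (∀ n (x y : V), ⟪P n x, y⟫ = ⟪x, P n y⟫) →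
    ∀ x : V, ‖x - (List.ofFn P).prod x‖ ^ 2 ≤ ∑ n, ‖x - P n x‖ ^ 2 := by
  intro N
  induction N with
  | zero => intro P _ _ x; simp
  | succ N ih =>
    intro P hidem hsym x
    have hlist : (List.ofFn P).prod = P 0 * (List.ofFn (fun i : Fin N => P i.succ)).prod := by
      rw [List.ofFn_succ, List.prod_cons]
    set R := (List.ofFn (fun i : Fin N => P i.succ)).prod with hR
    have hQx : (List.ofFn P).prod x = P 0 (R x) := by rw [hlist]; rfl
    have hsplit : x - (List.ofFn P).prod x = (x - P 0 x) + P 0 (x - R x) := by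
      rw [hQx, map_sub]; abel
    have horth : ⟪x - P 0 x, P 0 (x - R x)⟫ = 0 :=
      ortho (P 0) (hidem 0) (hsym 0) x (x - R x)
    have hnorm : ‖x - (List.ofFn P).prod x‖ ^ 2
        = ‖x - P 0 x‖ ^ 2 + ‖P 0 (x - R x)‖ ^ 2 := by
      rw [hsplit, norm_add_sq_real, horth]; ring
    have hcon : ‖P 0 (x - R x)‖ ≤ ‖x - R x‖ :=
      contract (P 0) (hidem 0) (hsym 0) _
    have hih : ‖x - R x‖ ^ 2 ≤ ∑ n : Fin N, ‖x - P n.succ x‖ ^ 2 :=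
      ih (fun i => P i.succ) (fun n => hidem n.succ) (fun n => hsym n.succ) x
    rw [hnorm, Fin.sum_univ_succ]
    have : ‖P 0 (x - R x)‖ ^ 2 ≤ ‖x - R x‖ ^ 2 := by
      apply pow_le_pow_left₀ (norm_nonneg _) hcon
    linarith

theorem stmt8 {V : Type*} [NormedAddCommGroup V] [InnerProductSpace ℝ V]
    [FiniteDimensional ℝ V] {N : ℕ} (P : Fin N → (V →ₗ[ℝ] V))
    (hidem : ∀ n, P n ∘ₗ P n = P n)
    (hsym : ∀ n (x y : V), ⟪P n x, y⟫ = ⟪x, P n y⟫)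
    (hcomm : ∀ m n, P m ∘ₗ P n = P n ∘ₗ P m)
    (Q : V →ₗ[ℝ] V) (hQ : Q = (List.ofFn P).prod) (x : V) :
    ‖x - Q x‖ ^ 2 ≤ ∑ n, ‖x - P n x‖ ^ 2 := by
  subst hQ
  exact main_ind N P hidem hsym x
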